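/- arXiv:1707.02430 — 6 statements merged into one kernel-verified Lean document; each statement's English description precedes it below -/
import Mathlib

section
/- Let J : [0,1] → ℝ be a differentiable convex function, and define I₁(η) = J(η) + (1-η)·J'(η) and I₋₁(η) = J(η) - η·J'(η). Then for all η, η̂ ∈ [0,1], the expected score I(η, η̂) = η·I₁(η̂) + (1-η)·I₋₁(η̂) satisfies I(η, η̂) ≤ J(η). -/
open Set

lemma tangent_le (J : ℝ → ℝ) (hconv : ConvexOn ℝ (Icc (0:ℝ) 1) J)
    (hdiff : ∀ x ∈ Icc (0:ℝ) 1, DifferentiableAt ℝ J x)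
    {η η' : ℝ} (hη : η ∈ Icc (0:ℝ) 1) (hη' : η' ∈ Icc (0:ℝ) 1) :
    J η' + (η - η') * deriv J η' ≤ J η := by
  rcases lt_trichotomy η' η with h | h | h
  · have := hconv.deriv_le_slope hη' hη h (hdiff _ hη')
    rw [slope_def_field] at this
    have hd : η - η' > 0 := by linarith
    rw [le_div_iff₀ hd] at this
    nlinarith [this]
  · simp [h]
  · have := hconv.slope_le_deriv hη hη' h (hdiff _ hη')
    rw [slope_def_field] at this
    have hd : η' - η > 0 := by linarith
    rw [div_le_iff₀ hd] at this
    nlinarith [this]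

/-- Savage's theorem, forward direction: if `J` is a differentiable convex function on
`[0,1]` and the scores are `I₁(η) = J(η) + (1-η)·J'(η)`, `I₋₁(η) = J(η) - η·J'(η)`,
then the expected score `I(η, η̂) = η·I₁(η̂) + (1-η)·I₋₁(η̂)` satisfies
`I(η, η̂) ≤ J(η)` for all `η, η̂ ∈ [0,1]`. -/
theorem savage_forward
    (J : ℝ → ℝ)
    (hconv : ConvexOn ℝ (Icc (0:ℝ) 1) J)
    (hdiff : ∀ x ∈ Icc (0:ℝ) 1, DifferentiableAt ℝ J x)
    (I1 Ineg1 : ℝ → ℝ)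
    (hI1 : ∀ η ∈ Icc (0:ℝ) 1, I1 η = J η + (1 - η) * deriv J η)
    (hIneg1 : ∀ η ∈ Icc (0:ℝ) 1, Ineg1 η = J η - η * deriv J η) :
    ∀ η ∈ Icc (0:ℝ) 1, ∀ η' ∈ Icc (0:ℝ) 1,
      η * I1 η' + (1 - η) * Ineg1 η' ≤ J η := by
  intro η hη η' hη'
  rw [hI1 η' hη', hIneg1 η' hη']
  have := tangent_le J hconv hdiff hη hη'
  nlinarith [this]
end

section
/- Let J : [0,1] → ℝ be a differentiable strictly convex function, and define I₁(η) = J(η) + (1-η)·J'(η) and I₋₁(η) = J(η) - η·J'(η). Then for all η, η̂ ∈ [0,1], the expected score I(η, η̂) = η·I₁(η̂) + (1-η)·I₋₁(η̂) satisfies I(η, η̂) = J(η) if and only if η̂ = η. -/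
open Set

/-- Savage's theorem, strictness part: if `J` is a differentiable strictly convex function on
`[0,1]` and the scores are `I₁(η) = J(η) + (1-η)·J'(η)`, `I₋₁(η) = J(η) - η·J'(η)`,
then the expected score `I(η, η̂) = η·I₁(η̂) + (1-η)·I₋₁(η̂)` equals `J(η)`
if and only if `η̂ = η`. -/
theorem savage_strict
    (J : ℝ → ℝ)
    (hconv : StrictConvexOn ℝ (Icc (0:ℝ) 1) J)
    (hdiff : ∀ x ∈ Icc (0:ℝ) 1, DifferentiableAt ℝ J x)
    (I1 Ineg1 : ℝ → ℝ)
    (hI1 : ∀ η ∈ Icc (0:ℝ) 1, I1 η = J η + (1 - η) * deriv J η)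
    (hIneg1 : ∀ η ∈ Icc (0:ℝ) 1, Ineg1 η = J η - η * deriv J η) :
    ∀ η ∈ Icc (0:ℝ) 1, ∀ η' ∈ Icc (0:ℝ) 1,
      (η * I1 η' + (1 - η) * Ineg1 η' = J η ↔ η' = η) := by
  intro η hη η' hη'
  rw [hI1 η' hη', hIneg1 η' hη']
  have key : η * (J η' + (1 - η') * deriv J η') + (1 - η) * (J η' - η' * deriv J η')
      = J η' + (η - η') * deriv J η' := by ring
  rw [key]
  constructor
  · intro h
    by_contra hne
    rcases lt_or_gt_of_ne hne with hlt | hgt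
    · -- η' < η : deriv J η' < slope J η' η
      have := hconv.deriv_lt_slope hη' hη hlt (hdiff η' hη')
      rw [slope_def_field, lt_div_iff₀ (by linarith)] at this
      nlinarith
    · -- η < η' : slope J η η' < deriv J η'
      have := hconv.slope_lt_deriv hη hη' hgt (hdiff η' hη')
      rw [slope_def_field, div_lt_iff₀ (by linarith)] at this
      nlinarith
  · rintro rfl; ring
end

section
/- Let J : [0,1] → ℝ be a continuously differentiable convex function with J(η) = J(1-η) for all η ∈ [0,1], and let f : [0,1] → ℝ be an invertible function whose inverse satisfies f⁻¹(-v) = 1 - f⁻¹(v) for all v in the range of f. Define φ(v) = -J(f⁻¹(v)) - (1 - f⁻¹(v))·J'(f⁻¹(v)). Then for all η ∈ [0,1], -φ(f(η)) = J(η) + (1-η)·J'(η) and -φ(-f(η)) = J(η) - η·J'(η). -/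
open Set

/-- Both sides are derivatives of `J` within `[a, b]` at `η`, where they are unique. -/
theorem deriv_reflect_eq_neg_deriv {J : ℝ → ℝ} {a b η : ℝ} (hab : a < b) (hη : η ∈ Icc a b)
    (hJη : DifferentiableAt ℝ J η) (hJη' : DifferentiableAt ℝ J (a + b - η))
    (hsym : EqOn J (fun x => J (a + b - x)) (Icc a b)) :
    deriv J (a + b - η) = -deriv J η := by
  have hreflect : HasDerivWithinAt J (-deriv J (a + b - η)) (Icc a b) η :=
    (hJη'.hasDerivAt.comp_const_sub (a + b) η).hasDerivWithinAt.congr hsym (hsym hη)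
  rw [(uniqueDiffOn_Icc hab η hη).eq_deriv _ hJη.hasDerivAt.hasDerivWithinAt hreflect, neg_neg]

theorem proper_loss_from_scoring_rule_general
    (J : ℝ → ℝ)
    (hdiff : ∀ x ∈ Icc (0:ℝ) 1, DifferentiableAt ℝ J x)
    (hJsym : ∀ η ∈ Icc (0:ℝ) 1, J η = J (1 - η))
    (f g : ℝ → ℝ)
    (hg : ∀ η ∈ Icc (0:ℝ) 1, g (f η) = η)
    (hgsym : ∀ η ∈ Icc (0:ℝ) 1, g (-(f η)) = 1 - g (f η))
    (φ : ℝ → ℝ)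
    (hφ : ∀ v, φ v = -J (g v) - (1 - g v) * deriv J (g v)) :
    ∀ η ∈ Icc (0:ℝ) 1,
      -φ (f η) = J η + (1 - η) * deriv J η ∧
      -φ (-(f η)) = J η - η * deriv J η := by
  intro η hη
  have hη' : 1 - η ∈ Icc (0:ℝ) 1 := ⟨by linarith [hη.2], by linarith [hη.1]⟩
  have hderiv : deriv J (1 - η) = -deriv J η := by
    simpa using deriv_reflect_eq_neg_deriv zero_lt_one hη (hdiff η hη)
      (by simpa using hdiff _ hη') (fun x hx => by simpa using hJsym x hx)
  constructor
  · rw [hφ, hg η hη]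
    ring
  · rw [hφ, hgsym η hη, hg η hη, ← hJsym η hη, hderiv]
    ring

/-- Theorem 2 of the paper, 'if' direction: let `J` be a continuously differentiable convex
function on `[0,1]` with `J(η) = J(1-η)`, and `f` an invertible link (with inverse `g` on the
range of `f`) satisfying `f⁻¹(-v) = 1 - f⁻¹(v)` on the range of `f`. If
`φ(v) = -J(f⁻¹(v)) - (1 - f⁻¹(v))·J'(f⁻¹(v))`, then `-φ(f(η)) = J(η) + (1-η)·J'(η)` and
`-φ(-f(η)) = J(η) - η·J'(η)` for all `η ∈ [0,1]`. -/
theorem proper_loss_from_scoring_rule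
    (J : ℝ → ℝ)
    (hconv : ConvexOn ℝ (Icc (0:ℝ) 1) J)
    (hdiff : ∀ x ∈ Icc (0:ℝ) 1, DifferentiableAt ℝ J x)
    (hcont : ContinuousOn (deriv J) (Icc (0:ℝ) 1))
    (hJsym : ∀ η ∈ Icc (0:ℝ) 1, J η = J (1 - η))
    (f g : ℝ → ℝ)
    (hfinj : InjOn f (Icc (0:ℝ) 1))
    (hg : ∀ η ∈ Icc (0:ℝ) 1, g (f η) = η)
    (hgsym : ∀ η ∈ Icc (0:ℝ) 1, g (-(f η)) = 1 - g (f η))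
    (φ : ℝ → ℝ)
    (hφ : ∀ v, φ v = -J (g v) - (1 - g v) * deriv J (g v)) :
    ∀ η ∈ Icc (0:ℝ) 1,
      -φ (f η) = J η + (1 - η) * deriv J η ∧
      -φ (-(f η)) = J η - η * deriv J η :=
  proper_loss_from_scoring_rule_general J hdiff hJsym f g hg hgsym φ hφ
end

section
/- Let C* : [0,1] → ℝ be differentiable with C*(η) = C*(1-η) for all η ∈ [0,1], and let f* : [0,1] → ℝ be invertible with inverse satisfying (f*)⁻¹(-v) = 1 - (f*)⁻¹(v) for all v in the range of f*. Define the loss φ(v) = C*((f*)⁻¹(v)) + (1 - (f*)⁻¹(v))·(C*)'((f*)⁻¹(v)). Then for all η ∈ [0,1], η·φ(f*(η)) + (1-η)·φ(-f*(η)) = C*(η). -/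
open Set

lemma deriv_antisym (Cstar : ℝ → ℝ)
    (hdiff : ∀ x ∈ Icc (0:ℝ) 1, DifferentiableAt ℝ Cstar x)
    (hsym : ∀ η ∈ Icc (0:ℝ) 1, Cstar η = Cstar (1 - η))
    {η : ℝ} (hη : η ∈ Ioo (0:ℝ) 1) :
    deriv Cstar (1 - η) = - deriv Cstar η := by
  have hη' : (1 - η) ∈ Icc (0:ℝ) 1 := ⟨by linarith [hη.2], by linarith [hη.1]⟩
  have heq : Cstar =ᶠ[nhds η] (fun x => Cstar (1 - x)) := by
    filter_upwards [Ioo_mem_nhds hη.1 hη.2] with x hx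
    exact hsym x ⟨le_of_lt hx.1, le_of_lt hx.2⟩
  have h1 : HasDerivAt (fun x : ℝ => Cstar (1 - x)) (deriv Cstar (1 - η) * (-1)) η := by
    have hc : HasDerivAt (fun x : ℝ => 1 - x) (-1) η := by
      simpa using (hasDerivAt_id η).const_sub 1
    exact ((hdiff (1 - η) hη').hasDerivAt).comp η hc
  have h2 : deriv Cstar η = deriv Cstar (1 - η) * (-1) := by
    rw [heq.deriv_eq, h1.deriv]
  linarith

/-- The key pointwise identity in Lemma 1 of the paper: if `C*` is differentiable on `[0,1]`
with `C*(η) = C*(1-η)`, `f*` is an invertible link (with inverse `g` on the range of `f*`)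
satisfying `(f*)⁻¹(-v) = 1 - (f*)⁻¹(v)`, and
`φ(v) = C*((f*)⁻¹(v)) + (1 - (f*)⁻¹(v))·(C*)'((f*)⁻¹(v))`, then for all `η ∈ [0,1]`,
`η·φ(f*(η)) + (1-η)·φ(-f*(η)) = C*(η)`. -/
theorem conditional_risk_identity
    (Cstar : ℝ → ℝ)
    (hdiff : ∀ x ∈ Icc (0:ℝ) 1, DifferentiableAt ℝ Cstar x)
    (hsym : ∀ η ∈ Icc (0:ℝ) 1, Cstar η = Cstar (1 - η))
    (fstar g : ℝ → ℝ)
    (hfinj : InjOn fstar (Icc (0:ℝ) 1))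
    (hg : ∀ η ∈ Icc (0:ℝ) 1, g (fstar η) = η)
    (hgsym : ∀ η ∈ Icc (0:ℝ) 1, g (-(fstar η)) = 1 - g (fstar η))
    (φ : ℝ → ℝ)
    (hφ : ∀ v, φ v = Cstar (g v) + (1 - g v) * deriv Cstar (g v)) :
    ∀ η ∈ Icc (0:ℝ) 1,
      η * φ (fstar η) + (1 - η) * φ (-(fstar η)) = Cstar η := by
  intro η hη
  have h1 : g (fstar η) = η := hg η hη
  have h2 : g (-(fstar η)) = 1 - η := by rw [hgsym η hη, h1]
  have hC : Cstar (1 - η) = Cstar η := (hsym η hη).symm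
  rw [hφ, hφ, h1, h2, hC]
  rcases eq_or_lt_of_le hη.1 with h0 | h0
  · rw [← h0]; ring
  rcases eq_or_lt_of_le hη.2 with h1' | h1'
  · rw [h1']; ring
  · have := deriv_antisym Cstar hdiff hsym ⟨h0, h1'⟩
    rw [this]; ring
end

section
/- Let μ be a probability measure on a measurable space X, let η : X → [0,1] be measurable, let C* : [0,1] → ℝ be differentiable with C*(η) = C*(1-η), and let f* : [0,1] → ℝ be invertible with inverse satisfying (f*)⁻¹(-v) = 1 - (f*)⁻¹(v). Define φ(v) = C*((f*)⁻¹(v)) + (1 - (f*)⁻¹(v))·(C*)'((f*)⁻¹(v)) and the optimal predictor p*(x) = f*(η(x)). Then the risk R_φ(p*) = ∫ [η(x)·φ(p*(x)) + (1-η(x))·φ(-p*(x))] dμ(x) equals ∫ C*(η(x)) dμ(x), provided the integrands are integrable. -/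
open Set MeasureTheory Filter Topology

/-! The symmetry `C*(t) = C*(1 - t)` makes `C*'(t) + C*'(1 - t)` vanish on `(0, 1)`. With
`g = (f*)⁻¹`, the conditional risk `t φ(f* t) + (1 - t) φ(-f* t)` expands to
`C*(t) + t (1 - t) (C*'(t) + C*'(1 - t))`, which is therefore `C*(t)` on all of `[0, 1]`;
integrating this pointwise identity against `μ` at `t = η x` gives the formula. -/

/-- Where `C` fails to be differentiable, the symmetry makes both derivatives the junk value `0`. -/
theorem deriv_add_deriv_one_sub_eq_zero {C : ℝ → ℝ}
    (hsym : ∀ t ∈ Icc (0:ℝ) 1, C t = C (1 - t)) {t : ℝ} (ht : t ∈ Ioo (0:ℝ) 1) :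
    deriv C t + deriv C (1 - t) = 0 := by
  have hloc : C =ᶠ[𝓝 t] fun s => C (1 - s) :=
    eventually_of_mem (Icc_mem_nhds ht.1 ht.2) hsym
  rw [hloc.deriv_eq, deriv_comp_const_sub, neg_add_cancel]

theorem conditional_risk_at_optimal_link_eq {C f g φ : ℝ → ℝ}
    (hsym : ∀ t ∈ Icc (0:ℝ) 1, C t = C (1 - t))
    (hg : ∀ t ∈ Icc (0:ℝ) 1, g (f t) = t)
    (hgsym : ∀ t ∈ Icc (0:ℝ) 1, g (-(f t)) = 1 - g (f t))
    (hφ : ∀ v, φ v = C (g v) + (1 - g v) * deriv C (g v))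
    {t : ℝ} (ht : t ∈ Icc (0:ℝ) 1) :
    t * φ (f t) + (1 - t) * φ (-(f t)) = C t := by
  have hpos : φ (f t) = C t + (1 - t) * deriv C t := by rw [hφ, hg t ht]
  have hneg : φ (-(f t)) = C t + t * deriv C (1 - t) := by
    rw [hφ, hgsym t ht, hg t ht, ← hsym t ht, sub_sub_cancel]
  have hcross : t * (1 - t) * (deriv C t + deriv C (1 - t)) = 0 := by
    rcases ht.1.eq_or_lt with rfl | h0
    · ring
    rcases ht.2.eq_or_lt with rfl | h1
    · ring
    rw [deriv_add_deriv_one_sub_eq_zero hsym ⟨h0, h1⟩, mul_zero]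
  rw [hpos, hneg]
  linear_combination hcross

theorem minimum_risk_formula_general
    {X : Type*} [MeasurableSpace X]
    (μ : Measure X)
    (η : X → ℝ) (hη_range : ∀ x, η x ∈ Icc (0:ℝ) 1)
    (Cstar : ℝ → ℝ)
    (hsym : ∀ t ∈ Icc (0:ℝ) 1, Cstar t = Cstar (1 - t))
    (fstar g : ℝ → ℝ)
    (hg : ∀ t ∈ Icc (0:ℝ) 1, g (fstar t) = t)
    (hgsym : ∀ t ∈ Icc (0:ℝ) 1, g (-(fstar t)) = 1 - g (fstar t))
    (φ : ℝ → ℝ)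
    (hφ : ∀ v, φ v = Cstar (g v) + (1 - g v) * deriv Cstar (g v))
    (pstar : X → ℝ) (hp : ∀ x, pstar x = fstar (η x)) :
    ∫ x, (η x * φ (pstar x) + (1 - η x) * φ (-(pstar x))) ∂μ
      = ∫ x, Cstar (η x) ∂μ := by
  refine integral_congr_ae (Eventually.of_forall fun x => ?_)
  simp only [hp x]
  exact conditional_risk_at_optimal_link_eq hsym hg hgsym hφ (hη_range x)

/-- Lemma 1 of the paper: for a proper loss `φ` generated from the minimum conditional risk
`C*` and optimal link `f*` (with inverse `g` satisfying the symmetry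
`(f*)⁻¹(-v) = 1 - (f*)⁻¹(v)`), the risk of the optimal predictor `p*(x) = f*(η(x))` equals
`∫ C*(η(x)) dμ(x)`. -/
theorem minimum_risk_formula
    {X : Type*} [MeasurableSpace X]
    (μ : Measure X) [IsProbabilityMeasure μ]
    (η : X → ℝ) (hη_meas : Measurable η) (hη_range : ∀ x, η x ∈ Icc (0:ℝ) 1)
    (Cstar : ℝ → ℝ)
    (hdiff : ∀ t ∈ Icc (0:ℝ) 1, DifferentiableAt ℝ Cstar t)
    (hsym : ∀ t ∈ Icc (0:ℝ) 1, Cstar t = Cstar (1 - t))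
    (fstar g : ℝ → ℝ)
    (hfinj : InjOn fstar (Icc (0:ℝ) 1))
    (hg : ∀ t ∈ Icc (0:ℝ) 1, g (fstar t) = t)
    (hgsym : ∀ t ∈ Icc (0:ℝ) 1, g (-(fstar t)) = 1 - g (fstar t))
    (φ : ℝ → ℝ)
    (hφ : ∀ v, φ v = Cstar (g v) + (1 - g v) * deriv Cstar (g v))
    (pstar : X → ℝ) (hp : ∀ x, pstar x = fstar (η x))
    (hint1 : Integrable (fun x => η x * φ (pstar x) + (1 - η x) * φ (-(pstar x))) μ)
    (hint2 : Integrable (fun x => Cstar (η x)) μ) :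
    ∫ x, (η x * φ (pstar x) + (1 - η x) * φ (-(pstar x))) ∂μ
      = ∫ x, Cstar (η x) ∂μ :=
  minimum_risk_formula_general μ η hη_range Cstar hsym fstar g hg hgsym φ hφ pstar hp
end

section
/- Let μ be a probability measure on a measurable space X, let η : X → [0,1] be measurable, let C* : [0,1] → ℝ be differentiable with C*(η) = C*(1-η), and let f* : [0,1] → ℝ be invertible with inverse satisfying (f*)⁻¹(-v) = 1 - (f*)⁻¹(v). Define φ(v) = C*((f*)⁻¹(v)) + (1 - (f*)⁻¹(v))·(C*)'((f*)⁻¹(v)), the optimal predictor p*(x) = f*(η(x)), and J(t) = -C*(t). Then the minimum risk R_φ(p*) = ∫ [η(x)·φ(p*(x)) + (1-η(x))·φ(-p*(x))] dμ(x) equals the negative refinement score: R_φ(p*) = -∫ J(η(x)) dμ(x) = -E[J(η(X))], provided the integrands are integrable. -/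
open Set MeasureTheory

/-- Lemma 2 of the paper: for a proper loss `φ` generated from the minimum conditional risk
`C*` and optimal link `f*` (with inverse `g` satisfying `(f*)⁻¹(-v) = 1 - (f*)⁻¹(v)`), and
with `J(t) = -C*(t)`, the minimum risk of the optimal predictor `p*(x) = f*(η(x))` equals
the negative refinement score `-∫ J(η(x)) dμ(x) = -E[J(η(X))]`. -/
theorem minimum_risk_eq_neg_refinement
    {X : Type*} [MeasurableSpace X]
    (μ : Measure X) [IsProbabilityMeasure μ]
    (η : X → ℝ) (hη_meas : Measurable η) (hη_range : ∀ x, η x ∈ Icc (0:ℝ) 1)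
    (Cstar : ℝ → ℝ)
    (hdiff : ∀ t ∈ Icc (0:ℝ) 1, DifferentiableAt ℝ Cstar t)
    (hsym : ∀ t ∈ Icc (0:ℝ) 1, Cstar t = Cstar (1 - t))
    (fstar g : ℝ → ℝ)
    (hfinj : InjOn fstar (Icc (0:ℝ) 1))
    (hg : ∀ t ∈ Icc (0:ℝ) 1, g (fstar t) = t)
    (hgsym : ∀ t ∈ Icc (0:ℝ) 1, g (-(fstar t)) = 1 - g (fstar t))
    (φ : ℝ → ℝ)
    (hφ : ∀ v, φ v = Cstar (g v) + (1 - g v) * deriv Cstar (g v))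
    (pstar : X → ℝ) (hp : ∀ x, pstar x = fstar (η x))
    (J : ℝ → ℝ) (hJ : ∀ t, J t = -Cstar t)
    (hint1 : Integrable (fun x => η x * φ (pstar x) + (1 - η x) * φ (-(pstar x))) μ)
    (hint2 : Integrable (fun x => J (η x)) μ) :
    ∫ x, (η x * φ (pstar x) + (1 - η x) * φ (-(pstar x))) ∂μ
      = -∫ x, J (η x) ∂μ := by
  have key : ∀ x, η x * φ (pstar x) + (1 - η x) * φ (-(pstar x)) = -(J (η x)) := by
    intro x
    set t := η x with ht
    have htI := hη_range x
    have h1t : 1 - t ∈ Icc (0:ℝ) 1 := ⟨by linarith [htI.2], by linarith [htI.1]⟩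
    have hgp : g (pstar x) = t := by rw [hp]; exact hg t htI
    have hgm : g (-(pstar x)) = 1 - t := by rw [hp, hgsym t htI, hg t htI]
    have hC : Cstar (1 - t) = Cstar t := (hsym t htI).symm
    rw [hφ, hφ, hgp, hgm, hJ, hC]
    have h2 : (1 - (1 - t)) = t := by ring
    rw [h2]
    rcases eq_or_lt_of_le htI.1 with h0 | h0
    · rw [ht, ← h0]; ring
    rcases eq_or_lt_of_le htI.2 with h1 | h1
    · rw [ht, h1]; ring
    · have hmem : Icc (0:ℝ) 1 ∈ nhds t := Icc_mem_nhds h0 h1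
      have heq : Cstar =ᶠ[nhds t] (fun s => Cstar (1 - s)) :=
        Filter.eventuallyEq_of_mem hmem (fun s hs => hsym s hs)
      have hcomp : HasDerivAt (fun s => Cstar (1 - s)) (deriv Cstar (1 - t) * (-1)) t :=
        HasDerivAt.comp t ((hdiff (1 - t) h1t).hasDerivAt) ((hasDerivAt_id t).const_sub 1)
      have hde := heq.deriv_eq
      rw [hcomp.deriv] at hde
      have hd : deriv Cstar (1 - t) = - deriv Cstar t := by linarith
      rw [hd]; ring
  have hfun : (fun x => η x * φ (pstar x) + (1 - η x) * φ (-(pstar x)))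
      = fun x => -(J (η x)) := funext key
  rw [hfun, integral_neg]
end
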